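/- arXiv:2106.11701 — 8 statements merged into one kernel-verified Lean document; each statement's English description precedes it below -/
import Mathlib

section
/- Let f: ℝ → ℝ≥0 be measurable and tile with both ℤ at level 1 and with αℤ at level 1/α, where α ∈ (0,1): ∑_{n∈ℤ} f(x−n) = 1 and ∑_{n∈ℤ} f(x−nα) = 1/α for a.e. x. Then the Lebesgue measure of the support of f is at least ⌈1/α⌉·α, and in particular at least 2α. -/
/-!
Tiling by `ℤ` at level `1` forces `f ≤ 1` almost everywhere. Hence at almost every `x` the
`αℤ`-tiling sum `∑ f (x + nα) = 1 / α` has at least `⌈1 / α⌉` nonzero terms, i.e. the orbit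
`x + αℤ` meets `supp f` at least `⌈1 / α⌉` times. Integrating this count over the fundamental
domain `[0, α)` recovers the measure of `supp f`, which is therefore at least `⌈1 / α⌉ α`.
-/

open MeasureTheory Set Function ENNReal

theorem le_tsum_of_tsum_ne_zero {ι : Type*} {a : ι → ℝ} (h0 : ∀ i, 0 ≤ a i)
    (hsum : ∑' i, a i ≠ 0) (i : ι) : a i ≤ ∑' i, a i :=
  Summable.le_tsum (by_contra fun h => hsum (tsum_eq_zero_of_not_summable h)) i fun j _ => h0 j

theorem natCeil_tsum_le_encard_support {ι : Type*} {a : ι → ℝ} (h1 : ∀ i, a i ≤ 1) :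
    (⌈∑' i, a i⌉₊ : ℕ∞) ≤ (support a).encard := by
  by_cases hfin : (support a).Finite
  · have hsum : ∑' i, a i = ∑ i ∈ hfin.toFinset, a i :=
      tsum_eq_sum fun i hi => by simpa using hi
    have hle : ∑ i ∈ hfin.toFinset, a i ≤ hfin.toFinset.card := by
      simpa using Finset.sum_le_sum fun i (_ : i ∈ hfin.toFinset) => h1 i
    rw [hfin.encard_eq_coe_toFinset_card, hsum]
    exact_mod_cast Nat.ceil_le.mpr hle
  · simp [Set.Infinite.encard_eq hfin]

theorem lintegral_eq_setLIntegral_Ico_tsum {g : ℝ → ℝ≥0∞} (hg : Measurable g) {T : ℝ}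
    (hT : 0 < T) : ∫⁻ x, g x = ∫⁻ x in Ico 0 T, ∑' n : ℤ, g (x + n * T) := by
  have htranslate (n : ℤ) :
      ∫⁻ x in Ico ((n : ℝ) * T) ((n + 1) * T), g x = ∫⁻ x in Ico 0 T, g (x + n * T) := by
    rw [← (measurePreserving_add_right volume ((n : ℝ) * T)).setLIntegral_comp_preimage_emb
      (measurableEmbedding_addRight _), preimage_add_const_Ico]
    ring_nf
  calc ∫⁻ x, g x = ∫⁻ x in ⋃ n : ℤ, Ico ((n : ℝ) * T) ((n + 1) * T), g x := by
        simpa [zsmul_eq_mul] using congrArg (fun s => ∫⁻ x in s, g x) (iUnion_Ico_zsmul hT).symm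
    _ = ∑' n : ℤ, ∫⁻ x in Ico ((n : ℝ) * T) ((n + 1) * T), g x := by
        refine lintegral_iUnion (fun _ => measurableSet_Ico) ?_ g
        simpa [zsmul_eq_mul] using pairwise_disjoint_Ico_zsmul T
    _ = ∫⁻ x in Ico 0 T, ∑' n : ℤ, g (x + n * T) := by
        rw [lintegral_tsum (f := fun (n : ℤ) x => g (x + n * T))
          fun n => (hg.comp (measurable_add_const _)).aemeasurable]
        exact tsum_congr htranslate

theorem volume_eq_setLIntegral_Ico_encard {s : Set ℝ} (hs : MeasurableSet s) {T : ℝ}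
    (hT : 0 < T) : volume s = ∫⁻ x in Ico 0 T, ({n : ℤ | x + n * T ∈ s}.encard : ℝ≥0∞) := by
  rw [← lintegral_indicator_one hs,
    lintegral_eq_setLIntegral_Ico_tsum (measurable_one.indicator hs) hT]
  refine setLIntegral_congr_fun measurableSet_Ico fun x _ => ?_
  rw [← tsum_set_one]
  exact (tsum_subtype _ 1).symm

/-- If a nonnegative measurable `f : ℝ → ℝ` tiles with `ℤ` at level `1` and with
`αℤ` at level `1/α` for `α ∈ (0,1)`, then `|supp f| ≥ ⌈1/α⌉·α ≥ 2α`. -/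
theorem support_lower_bound_two_lattices
    (f : ℝ → ℝ) (α : ℝ) (hα : α ∈ Set.Ioo (0 : ℝ) 1)
    (hmeas : Measurable f) (hnonneg : ∀ x, 0 ≤ f x)
    (htile1 : ∀ᵐ x : ℝ, ∑' n : ℤ, f (x - n) = 1)
    (htile2 : ∀ᵐ x : ℝ, ∑' n : ℤ, f (x - n * α) = 1 / α) :
    ENNReal.ofReal ((⌈1 / α⌉ : ℝ) * α) ≤ volume (Function.support f) ∧
    ENNReal.ofReal (2 * α) ≤ volume (Function.support f) := by
  obtain ⟨hα0, hα1⟩ := hα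
  have hle_one : ∀ᵐ x, f x ≤ 1 := by
    filter_upwards [htile1] with x hx
    simpa [hx] using le_tsum_of_tsum_ne_zero (a := fun n : ℤ => f (x - n)) (fun n => hnonneg _)
      (by rw [hx]; exact one_ne_zero) 0
  have hle_one_shifts : ∀ᵐ x, ∀ n : ℤ, f (x + n * α) ≤ 1 := ae_all_iff.2 fun n =>
    (quasiMeasurePreserving_add_right volume _).ae hle_one
  have hcount : ∀ᵐ x, (⌈1 / α⌉₊ : ℝ≥0∞) ≤ {n : ℤ | x + n * α ∈ support f}.encard := by
    filter_upwards [htile2, hle_one_shifts] with x hx hle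
    have hsum : ∑' n : ℤ, f (x + n * α) = 1 / α := by
      rw [← hx, ← (Equiv.neg ℤ).tsum_eq]
      simp [sub_eq_add_neg]
    exact_mod_cast hsum ▸ natCeil_tsum_le_encard_support hle
  have hceil : (⌈1 / α⌉ : ℝ) = ⌈1 / α⌉₊ := (natCast_ceil_eq_intCast_ceil (by positivity)).symm
  have htwo : (2 : ℝ) ≤ ⌈1 / α⌉₊ := by
    exact_mod_cast Nat.lt_ceil.2 (by rw [Nat.cast_one]; exact one_lt_one_div hα0 hα1)
  have hmain : ENNReal.ofReal ((⌈1 / α⌉ : ℝ) * α) ≤ volume (support f) := by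
    rw [volume_eq_setLIntegral_Ico_encard (measurableSet_support hmeas) hα0, hceil,
      ENNReal.ofReal_mul (by positivity), ofReal_natCast]
    calc (⌈1 / α⌉₊ : ℝ≥0∞) * ENNReal.ofReal α = ∫⁻ _ in Ico 0 α, (⌈1 / α⌉₊ : ℝ≥0∞) := by
          simp [mul_comm]
      _ ≤ _ := lintegral_mono_ae (ae_restrict_of_ae hcount)
  refine ⟨hmain, le_trans (ENNReal.ofReal_le_ofReal ?_) hmain⟩
  rw [hceil]
  exact mul_le_mul_of_nonneg_right htwo hα0.le
end

section
/- Let Λ₁ = ℤᵈ and Λ₂ = αℤᵈ with α > 0 irrational, d ≥ 1. Then there is no bounded set F ⊆ ℝᵈ containing exactly one representative from each coset of Λ₁ and exactly one representative from each coset of Λ₂. -/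
/-!
Suppose `F ⊆ [-r, r]ᵈ` meets every coset of `βℤᵈ` and each coset of `γℤᵈ` at most once.
For each `n` in the box `[-N, N]ᵈ ∩ ℤᵈ` pick `y ∈ F` with `y = γ n + β k`, `k ∈ ℤᵈ`. Then `k` lies in
the box of radius `⌈(r + γ N) / β⌉`, and `n ↦ k` is injective because equal `k` put two points of
`F` in the same coset of `γℤᵈ`. Comparing box sizes gives `β N < r + γ N + β` for every `N`,
hence `β ≤ γ`. For a common fundamental domain of `ℤᵈ` and `αℤᵈ` this holds both ways, so `α = 1`.
-/

open Finset

variable {ι : Type*}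

def LatticeCongr (β : ℝ) (x y : ι → ℝ) : Prop := ∀ i, ∃ n : ℤ, y i - x i = n * β

theorem LatticeCongr.refl (β : ℝ) (x : ι → ℝ) : LatticeCongr β x x :=
  fun _ => ⟨0, by simp⟩

theorem eq_of_latticeCongr_of_existsUnique {β : ℝ} {F : Set (ι → ℝ)}
    (h : ∀ x, ∃! y, y ∈ F ∧ LatticeCongr β x y) :
    ∀ y ∈ F, ∀ z ∈ F, LatticeCongr β y z → y = z :=
  fun y hy _ hz hyz => (h y).unique ⟨hy, LatticeCongr.refl β y⟩ ⟨hz, hyz⟩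

section IntBox

variable (ι) [Fintype ι] [DecidableEq ι]

noncomputable def intBox (K : ℤ) : Finset (ι → ℤ) := Icc (fun _ => -K) (fun _ => K)

variable {ι}

theorem mem_intBox {K : ℤ} {n : ι → ℤ} : n ∈ intBox ι K ↔ ∀ i, |n i| ≤ K := by
  simp only [intBox, mem_Icc, Pi.le_def, abs_le, forall_and]

theorem card_intBox (K : ℤ) : #(intBox ι K) = (2 * K + 1).toNat ^ Fintype.card ι := by
  rw [intBox, Pi.card_Icc, prod_const, Int.card_Icc, card_univ]
  congr 2
  ring

theorem natCast_le_of_card_intBox_le [Nonempty ι] {N : ℕ} {K : ℤ}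
    (h : #(intBox ι N) ≤ #(intBox ι K)) : (N : ℤ) ≤ K := by
  rw [card_intBox, card_intBox] at h
  have := (Nat.pow_le_pow_iff_left Fintype.card_ne_zero).1 h
  omega

end IntBox

theorem mul_natCast_lt_of_meets_of_separates [Fintype ι] [Nonempty ι] {β γ r : ℝ} (hβ : 0 < β)
    (hγ : 0 < γ) {F : Set (ι → ℝ)} (hr : ∀ y ∈ F, ∀ i, |y i| ≤ r)
    (hmeet : ∀ x, ∃ y ∈ F, LatticeCongr β x y)
    (hsep : ∀ y ∈ F, ∀ z ∈ F, LatticeCongr γ y z → y = z) (N : ℕ) :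
    β * N < r + γ * N + β := by
  classical
  have hdecomp : ∀ n : ι → ℤ, ∃ y ∈ F, ∃ k : ι → ℤ, ∀ i, y i = γ * n i + β * k i := by
    intro n
    obtain ⟨y, hyF, hy⟩ := hmeet (fun i => γ * n i)
    choose k hk using hy
    exact ⟨y, hyF, k, fun i => by linarith [hk i]⟩
  choose y hyF k hk using hdecomp
  set K := ⌈(r + γ * N) / β⌉
  have hmaps : ∀ n ∈ intBox ι N, k n ∈ intBox ι K := by
    intro n hn
    rw [mem_intBox] at hn ⊢
    intro i
    have hn' : |(n i : ℝ)| ≤ N := by exact_mod_cast hn i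
    have hk_bound : |(k n i : ℝ)| * β ≤ r + γ * N :=
      calc |(k n i : ℝ)| * β = |y n i - γ * n i| := by
            rw [hk n i, add_sub_cancel_left, abs_mul, abs_of_pos hβ, mul_comm]
        _ ≤ |y n i| + γ * |(n i : ℝ)| := by
            simpa only [abs_mul, abs_of_pos hγ] using abs_sub (y n i) (γ * n i)
        _ ≤ r + γ * N := by gcongr; exact hr _ (hyF n) i
    have : ((|k n i| : ℤ) : ℝ) ≤ (r + γ * N) / β := by
      rw [Int.cast_abs, le_div_iff₀ hβ]
      exact hk_bound
    exact_mod_cast this.trans (Int.le_ceil _)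
  have hinj : Set.InjOn k (intBox ι N) := by
    intro n _ n' _ hkk
    have hcongr : LatticeCongr γ (y n) (y n') :=
      fun i => ⟨n' i - n i, by rw [hk n i, hk n' i, hkk]; push_cast; ring⟩
    have hy := hsep _ (hyF n) _ (hyF n') hcongr
    funext i
    have hki := hk n i
    rw [hy, hkk, hk n' i] at hki
    have : γ * n i = γ * n' i := by linarith
    exact_mod_cast mul_left_cancel₀ hγ.ne' this
  have hNK : (N : ℤ) ≤ K := natCast_le_of_card_intBox_le (card_le_card_of_injOn k hmaps hinj)
  have hN : (N : ℝ) - 1 < (r + γ * N) / β := by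
    have := (Int.cast_le.2 hNK).trans_lt (Int.ceil_lt_add_one ((r + γ * N) / β))
    push_cast at this
    linarith
  rw [lt_div_iff₀ hβ] at hN
  linarith

theorem le_of_meets_of_separates [Fintype ι] [Nonempty ι] {β γ : ℝ} (hβ : 0 < β) (hγ : 0 < γ)
    {F : Set (ι → ℝ)} (hF : Bornology.IsBounded F)
    (hmeet : ∀ x, ∃ y ∈ F, LatticeCongr β x y)
    (hsep : ∀ y ∈ F, ∀ z ∈ F, LatticeCongr γ y z → y = z) : β ≤ γ := by
  obtain ⟨r, hr⟩ := isBounded_iff_forall_norm_le.1 hF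
  have hr' : ∀ y ∈ F, ∀ i, |y i| ≤ r := fun y hy i => (norm_le_pi_norm y i).trans (hr y hy)
  by_contra! hlt
  obtain ⟨N, hN⟩ := exists_nat_gt ((r + β) / (β - γ))
  rw [div_lt_iff₀ (sub_pos.2 hlt)] at hN
  have := mul_natCast_lt_of_meets_of_separates hβ hγ hr' hmeet hsep N
  linarith

/-- For `Λ₁ = ℤᵈ` and `Λ₂ = αℤᵈ` with `α > 0` irrational, there is no bounded
set `F ⊆ ℝᵈ` containing exactly one representative from each coset of `Λ₁` and
exactly one from each coset of `Λ₂`. -/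
theorem no_bounded_common_fundamental_domain
    (d : ℕ) (hd : 1 ≤ d) (α : ℝ) (hα : 0 < α) (hirr : Irrational α)
    (F : Set (Fin d → ℝ)) (hFb : Bornology.IsBounded F)
    (h1 : ∀ x : Fin d → ℝ, ∃! y, y ∈ F ∧ ∀ i, ∃ n : ℤ, y i - x i = n)
    (h2 : ∀ x : Fin d → ℝ, ∃! y, y ∈ F ∧ ∀ i, ∃ n : ℤ, y i - x i = n * α) :
    False := by
  have : Nonempty (Fin d) := ⟨⟨0, hd⟩⟩
  have h1' : ∀ x, ∃! y, y ∈ F ∧ LatticeCongr 1 x y := by simpa only [LatticeCongr, mul_one]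
  have h2' : ∀ x, ∃! y, y ∈ F ∧ LatticeCongr α x y := h2
  have hle : α ≤ 1 := le_of_meets_of_separates hα one_pos hFb (fun x => (h2' x).exists)
    (eq_of_latticeCongr_of_existsUnique h1')
  have hge : 1 ≤ α := le_of_meets_of_separates one_pos hα hFb (fun x => (h1' x).exists)
    (eq_of_latticeCongr_of_existsUnique h2')
  exact hirr.ne_one (le_antisymm hle hge)
end

section
/- Let α > 1 be irrational and let G = {m + nα : m, n ∈ ℤ} ⊆ ℝ. There is no bounded set F ⊆ G containing exactly one point from each coset k + αℤ (k ∈ ℤ) and exactly one point from each coset ℤ + kα (k ∈ ℤ). -/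
/-!
Each coset `k + αℤ` meets `F` in a point `k + σ(k) α`, and since `F` meets each coset `ℤ + jα`
only once, `σ : ℤ → ℤ` is injective. Boundedness of `F` forces `σ(k) α ≈ -k`, so `σ` squeezes the
`N + 1` integers `0, …, N` into an interval of length about `N / α`, which for `α > 1` and `N`
large holds fewer than `N + 1` integers.
-/

open Function

theorem Int.card_le_sub_add_one_of_forall_mem {s : Finset ℤ} (hs : s.Nonempty) {x y : ℝ}
    (hxy : ∀ n ∈ s, x ≤ n ∧ (n : ℝ) ≤ y) : (s.card : ℝ) ≤ y - x + 1 := by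
  obtain ⟨n, hn⟩ := hs
  have hceil_le_floor : ⌈x⌉ ≤ ⌊y⌋ :=
    Int.cast_le.mp ((Int.ceil_le.mpr (hxy n hn).1).trans (Int.le_floor.mpr (hxy n hn).2))
  have hsub : s ⊆ Finset.Icc ⌈x⌉ ⌊y⌋ := fun m hm => by
    rw [Finset.mem_Icc, Int.ceil_le, Int.le_floor]
    exact hxy m hm
  have hcard : (s.card : ℤ) ≤ ⌊y⌋ + 1 - ⌈x⌉ := by
    have := Finset.card_le_card hsub
    rw [Int.card_Icc] at this
    omega
  calc (s.card : ℝ) ≤ ⌊y⌋ + 1 - ⌈x⌉ := by exact_mod_cast hcard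
    _ ≤ y - x + 1 := by linarith [Int.floor_le y, Int.le_ceil x]

theorem not_injective_of_abs_add_mul_le {α M : ℝ} (hα : 1 < α) (σ : ℤ → ℤ)
    (hσ : ∀ k : ℤ, |k + σ k * α| ≤ M) : ¬ Injective σ := by
  intro hinj
  have hα0 : 0 < α := by linarith
  obtain ⟨N, hN⟩ := exists_nat_gt (2 * M / (α - 1))
  rw [div_lt_iff₀ (by linarith)] at hN
  set s := (Finset.Icc (0 : ℤ) N).image σ
  have hs_card : s.card = N + 1 := by
    rw [Finset.card_image_of_injective _ hinj, Int.card_Icc]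
    omega
  have hs_mem : ∀ j ∈ s, (-M - N) / α ≤ j ∧ (j : ℝ) ≤ M / α := by
    simp only [s, Finset.mem_image, Finset.mem_Icc]
    rintro _ ⟨k, ⟨hk0, hkN⟩, rfl⟩
    have hk0' : (0 : ℝ) ≤ k := by exact_mod_cast hk0
    have hkN' : (k : ℝ) ≤ N := by exact_mod_cast hkN
    obtain ⟨hlow, hhigh⟩ := abs_le.mp (hσ k)
    rw [div_le_iff₀ hα0, le_div_iff₀ hα0]
    constructor <;> linarith
  have hcard := Int.card_le_sub_add_one_of_forall_mem (by simp [s]) hs_mem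
  rw [hs_card, div_sub_div_same] at hcard
  have hNα : N * α ≤ M - (-M - N) := by
    rw [← le_div_iff₀ hα0]
    push_cast at hcard
    linarith
  linarith

theorem no_bounded_common_fundamental_domain_in_G_general
    (α : ℝ) (hα : 1 < α)
    (F : Set ℝ)
    (hFb : ∃ M : ℝ, ∀ x ∈ F, |x| ≤ M)
    (h1 : ∀ k : ℤ, ∃! x, x ∈ F ∧ ∃ n : ℤ, x = k + n * α)
    (h2 : ∀ k : ℤ, ∃! x, x ∈ F ∧ ∃ m : ℤ, x = m + k * α) :
    False := by
  obtain ⟨M, hM⟩ := hFb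
  choose f hfF σ hσ using fun k => (h1 k).exists
  refine not_injective_of_abs_add_mul_le hα σ (fun k => hσ k ▸ hM _ (hfF k)) ?_
  intro k k' hkk'
  have hf : f k = f k' := (h2 (σ k)).unique ⟨hfF k, k, hσ k⟩ ⟨hfF k', k', hkk' ▸ hσ k'⟩
  rw [hσ k, hσ k', hkk'] at hf
  exact_mod_cast add_right_cancel hf

/-- Let `α > 1` be irrational and `G = {m + nα : m, n ∈ ℤ} ⊆ ℝ`. There is no
bounded `F ⊆ G` containing exactly one point of each coset `k + αℤ` and exactly
one point of each coset `ℤ + kα`. -/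
theorem no_bounded_common_fundamental_domain_in_G
    (α : ℝ) (hα : 1 < α) (hirr : Irrational α)
    (F : Set ℝ)
    (hFG : ∀ x ∈ F, ∃ m n : ℤ, x = m + n * α)
    (hFb : ∃ M : ℝ, ∀ x ∈ F, |x| ≤ M)
    (h1 : ∀ k : ℤ, ∃! x, x ∈ F ∧ ∃ n : ℤ, x = k + n * α)
    (h2 : ∀ k : ℤ, ∃! x, x ∈ F ∧ ∃ m : ℤ, x = m + k * α) :
    False :=
  no_bounded_common_fundamental_domain_in_G_general α hα F hFb h1 h2
end

section
/- Let G be a finite abelian group, G₁, G₂ ≤ G subgroups, and set H = G₁ ∩ G₂, Γ = G/H, Γᵢ = Gᵢ/H. Define S^G_{G₁,G₂} as the minimum of |supp f| over nonnegative f: G → ℝ≥0 with f * 𝟙_{G₁} ≡ |G₁| and f * 𝟙_{G₂} ≡ |G₂|. Then S^G_{G₁,G₂} = S^Γ_{Γ₁,Γ₂}. -/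
open Function

/-- The minimal support size of a nonnegative function on the finite abelian
group `G` tiling with both subgroups `G₁, G₂` at levels `|G₁|, |G₂|`. -/
noncomputable def minSupp {G : Type*} [AddCommGroup G] [Finite G]
    (G₁ G₂ : AddSubgroup G) : ℕ :=
  sInf {n : ℕ | ∃ f : G → ℝ, (∀ x, 0 ≤ f x) ∧
    (∀ x, ∑ᶠ g : G₁, f (x - g) = Nat.card G₁) ∧
    (∀ x, ∑ᶠ g : G₂, f (x - g) = Nat.card G₂) ∧
    n = (Function.support f).ncard}

/-!
Pushing a function forward along a surjection `φ : G → Γ` (summing over fibres) turns its sums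
over the cosets of a subgroup `K ≥ ker φ` into sums over the cosets of `φ K`, because
`φ⁻¹ (φ x - φ K) = x - K`. Divided by `|ker φ|`, the pushforward of a function competing for
`minSupp G₁ G₂` competes for `minSupp (φ G₁) (φ G₂)`, and its support is no larger. Conversely, a
competitor on `Γ`, multiplied by `|ker φ|` and placed on a set of coset representatives, is a
competitor on `G` with a support of the same size. With `φ : G → G ⧸ (G₁ ⊓ G₂)`, this gives the theorem.
-/

noncomputable def fiberSum {α β M : Type*} [AddCommMonoid M] (φ : α → β) (F : α → M) (b : β) :
    M :=
  ∑ᶠ a ∈ φ ⁻¹' {b}, F a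

section FiberSum

variable {α β M : Type*} [AddCommMonoid M]

lemma fiberSum_extend {φ : α → β} {s : β → α} (hs : LeftInverse φ s) (g : β → M) :
    fiberSum φ (extend s g 0) = g := by
  ext b
  rw [fiberSum, finsum_mem_def, finsum_eq_single _ (s b),
    Set.indicator_of_mem (show s b ∈ φ ⁻¹' {b} from hs b), hs.injective.extend_apply]
  intro a ha
  refine Set.indicator_apply_eq_zero.2 fun (hab : φ a = b) => extend_apply' _ _ _ ?_
  rintro ⟨c, rfl⟩
  exact ha (congrArg s ((hs c).symm.trans hab))

lemma support_fiberSum_subset (φ : α → β) (F : α → M) :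
    support (fiberSum φ F) ⊆ φ '' support F := by
  intro b hb
  obtain ⟨a, hab, ha⟩ := exists_ne_zero_of_finsum_mem_ne_zero hb
  exact ⟨a, ha, hab⟩

lemma fiberSum_nonneg [PartialOrder M] [IsOrderedAddMonoid M] (φ : α → β) {F : α → M}
    (hF : 0 ≤ F) : 0 ≤ fiberSum φ F :=
  fun _ => finsum_nonneg fun a => finsum_nonneg fun _ => hF a

end FiberSum

section Quotient

variable {G Γ : Type*} [AddCommGroup G] [AddCommGroup Γ] {φ : G →+ Γ} {K : AddSubgroup G}

lemma AddSubgroup.card_map_mul_card_ker (h : φ.ker ≤ K) :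
    Nat.card (K.map φ) * Nat.card φ.ker = Nat.card K := by
  rw [← relIndex_ker, ← relIndex_bot_left, ← relIndex_bot_left, mul_comm,
    relIndex_mul_relIndex _ _ _ bot_le h]

lemma AddSubgroup.map_mem_map_iff_of_ker_le (h : φ.ker ≤ K) {g : G} :
    φ g ∈ K.map φ ↔ g ∈ K := by
  rw [← mem_comap, comap_map_eq_self h]

theorem finsum_map_fiberSum_sub {M : Type*} [AddCommMonoid M] [Finite G] (h : φ.ker ≤ K)
    (F : G → M) (x : G) :
    ∑ᶠ γ : K.map φ, fiberSum φ F (φ x - γ) = ∑ᶠ k : K, F (x - k) := by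
  classical
  have := Fintype.ofFinite G
  have := Finite.of_surjective _ (φ.addSubgroupMap_surjective K)
  have := Fintype.ofFinite (K.map φ)
  rw [finsum_eq_sum_of_fintype, finsum_eq_sum_of_fintype,
    ← Fintype.sum_fiberwise (φ.addSubgroupMap K)]
  refine Fintype.sum_congr _ _ fun γ => ?_
  rw [fiberSum, ← finsum_set_coe_eq_finsum_mem, finsum_eq_sum_of_fintype]
  have hsub (y : φ ⁻¹' {φ x - γ}) : φ (x - y) = γ := by
    rw [map_sub, show φ y = φ x - γ from y.2, sub_sub_cancel]
  let e : {k : K // φ.addSubgroupMap K k = γ} ≃ φ ⁻¹' {φ x - γ} :=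
    { toFun k := ⟨x - k.1, by simp [← k.2]⟩
      invFun y := ⟨⟨x - y, (AddSubgroup.map_mem_map_iff_of_ker_le h).1 (by rw [hsub]; exact γ.2)⟩,
        Subtype.ext (hsub y)⟩
      left_inv k := Subtype.ext (Subtype.ext (sub_sub_cancel _ _))
      right_inv y := Subtype.ext (sub_sub_cancel _ _) }
  exact (Fintype.sum_equiv e _ _ fun k => rfl).symm

def HasCosetSumsCard (K : AddSubgroup G) (f : G → ℝ) : Prop :=
  ∀ x, ∑ᶠ k : K, f (x - k) = Nat.card K

lemma hasCosetSumsCard_one [Finite G] (K : AddSubgroup G) : HasCosetSumsCard K 1 := by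
  have := Fintype.ofFinite K
  intro x
  simp [finsum_eq_sum_of_fintype, Nat.card_eq_fintype_card]

variable [Finite G]

lemma HasCosetSumsCard.extend {s : Γ → G} (hs : LeftInverse φ s) (h : φ.ker ≤ K) {f : Γ → ℝ}
    (hf : HasCosetSumsCard (K.map φ) f) :
    HasCosetSumsCard K (extend s ((Nat.card φ.ker : ℝ) • f) 0) := by
  intro x
  rw [← finsum_map_fiberSum_sub h, fiberSum_extend hs]
  simp only [Pi.smul_apply, smul_eq_mul]
  rw [← mul_finsum, hf, ← AddSubgroup.card_map_mul_card_ker h]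
  push_cast
  ring

lemma HasCosetSumsCard.fiberSum (hφ : Surjective φ) (h : φ.ker ≤ K) {F : G → ℝ}
    (hF : HasCosetSumsCard K F) :
    HasCosetSumsCard (K.map φ) ((Nat.card φ.ker : ℝ)⁻¹ • fiberSum φ F) := by
  intro δ
  obtain ⟨x, rfl⟩ := hφ δ
  have hker : (Nat.card φ.ker : ℝ) ≠ 0 := Nat.cast_ne_zero.2 Nat.card_pos.ne'
  simp only [Pi.smul_apply, smul_eq_mul]
  rw [← mul_finsum, finsum_map_fiberSum_sub h, hF x, ← AddSubgroup.card_map_mul_card_ker h]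
  push_cast
  field_simp

variable {G₁ G₂ : AddSubgroup G}

lemma minSupp_le {f : G → ℝ} (hf : 0 ≤ f) (hf₁ : HasCosetSumsCard G₁ f)
    (hf₂ : HasCosetSumsCard G₂ f) : minSupp G₁ G₂ ≤ (support f).ncard :=
  Nat.sInf_le ⟨f, hf, hf₁, hf₂, rfl⟩

lemma exists_ncard_support_eq_minSupp (G₁ G₂ : AddSubgroup G) :
    ∃ f : G → ℝ, 0 ≤ f ∧ HasCosetSumsCard G₁ f ∧ HasCosetSumsCard G₂ f ∧
      (support f).ncard = minSupp G₁ G₂ := by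
  obtain ⟨f, hf, hf₁, hf₂, hn⟩ := Nat.sInf_mem (s := {n | ∃ f : G → ℝ, 0 ≤ f ∧
      HasCosetSumsCard G₁ f ∧ HasCosetSumsCard G₂ f ∧ n = (support f).ncard})
    ⟨_, 1, zero_le_one, hasCosetSumsCard_one G₁, hasCosetSumsCard_one G₂, rfl⟩
  exact ⟨f, hf, hf₁, hf₂, hn.symm⟩

variable [Finite Γ]

lemma minSupp_le_minSupp_map (hφ : Surjective φ) (h₁ : φ.ker ≤ G₁) (h₂ : φ.ker ≤ G₂) :
    minSupp G₁ G₂ ≤ minSupp (G₁.map φ) (G₂.map φ) := by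
  obtain ⟨f, hf, hf₁, hf₂, hfn⟩ := exists_ncard_support_eq_minSupp (G₁.map φ) (G₂.map φ)
  have hs : LeftInverse φ (surjInv hφ) := rightInverse_surjInv hφ
  have hker : (Nat.card φ.ker : ℝ) ≠ 0 := Nat.cast_ne_zero.2 Nat.card_pos.ne'
  calc minSupp G₁ G₂
      ≤ (support (extend (surjInv hφ) ((Nat.card φ.ker : ℝ) • f) 0)).ncard :=
        minSupp_le (extend_nonneg (smul_nonneg (Nat.cast_nonneg _) hf) le_rfl)
          (hf₁.extend hs h₁) (hf₂.extend hs h₂)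
    _ = (support f).ncard := by
        rw [support_extend_zero hs.injective, Set.ncard_image_of_injective _ hs.injective,
          support_const_smul_of_ne_zero _ _ hker]
    _ = _ := hfn

lemma minSupp_map_le_minSupp (hφ : Surjective φ) (h₁ : φ.ker ≤ G₁) (h₂ : φ.ker ≤ G₂) :
    minSupp (G₁.map φ) (G₂.map φ) ≤ minSupp G₁ G₂ := by
  obtain ⟨F, hF, hF₁, hF₂, hFn⟩ := exists_ncard_support_eq_minSupp G₁ G₂
  calc minSupp (G₁.map φ) (G₂.map φ)
      ≤ (support ((Nat.card φ.ker : ℝ)⁻¹ • fiberSum φ F)).ncard :=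
        minSupp_le (smul_nonneg (by positivity) (fiberSum_nonneg φ hF))
          (hF₁.fiberSum hφ h₁) (hF₂.fiberSum hφ h₂)
    _ ≤ (φ '' support F).ncard :=
        Set.ncard_le_ncard ((support_const_smul_subset _ _).trans (support_fiberSum_subset φ F))
    _ ≤ (support F).ncard := Set.ncard_image_le (Set.toFinite _)
    _ = _ := hFn

theorem minSupp_map_eq (hφ : Surjective φ) (h₁ : φ.ker ≤ G₁) (h₂ : φ.ker ≤ G₂) :
    minSupp (G₁.map φ) (G₂.map φ) = minSupp G₁ G₂ :=
  (minSupp_map_le_minSupp hφ h₁ h₂).antisymm (minSupp_le_minSupp_map hφ h₁ h₂)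

end Quotient

/-- Reduction to trivial intersection: with `H = G₁ ∩ G₂`, `Γ = G/H`,
`Γᵢ = Gᵢ/H`, we have `S^G_{G₁,G₂} = S^Γ_{Γ₁,Γ₂}`. -/
theorem minSupp_quotient {G : Type*} [AddCommGroup G] [Finite G]
    (G₁ G₂ : AddSubgroup G) :
    minSupp G₁ G₂ =
      minSupp (G₁.map (QuotientAddGroup.mk' (G₁ ⊓ G₂)))
              (G₂.map (QuotientAddGroup.mk' (G₁ ⊓ G₂))) := by
  have hker := QuotientAddGroup.ker_mk' (G₁ ⊓ G₂)
  exact (minSupp_map_eq (QuotientAddGroup.mk'_surjective _) (hker.trans_le inf_le_left)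
    (hker.trans_le inf_le_right)).symm
end

section
/- Let G = G₁ × G₂ be a product of finite abelian groups with |G₁| dividing |G₂|. Then there exists a set F ⊆ G with |F| = |G₂| such that f = |G₁|·𝟙_F satisfies f * 𝟙_{G₁×{0}} ≡ |G₁| and f * 𝟙_{{0}×G₂} ≡ |G₂|. Consequently S^G_{G₁,G₂} = |G₂| = [G : G₁]. -/
/-!
Write `|G₂| = |G₁| · m` and pick a map `φ : G₂ → G₁` all of whose fibres have `m` elements.
The transposed graph `F = {(φ y, y)}` meets every coset `G₁ × {y}` in exactly one point and
every coset `{a} × G₂` in the `m` points of a fibre, so `|G₁| · 𝟙_F` tiles with `G₁ × {0}` at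
level `|G₁|` and with `{0} × G₂` at level `|G₁| · m = |G₂|`. Conversely, the support of any
function tiling with `G₁ × {0}` at a nonzero level meets every coset of `G₁ × {0}`, so it has at
least `[G : G₁ × {0}] = |G₂|` elements.
-/

open Function

theorem exists_ncard_preimage_singleton_eq {α β : Type*} [Finite α] [Finite β] {m : ℕ}
    (hm : Nat.card α = Nat.card β * m) :
    ∃ φ : α → β, ∀ b, (φ ⁻¹' {b}).ncard = m := by
  obtain ⟨e⟩ : Nonempty (α ≃ β × Fin m) := Finite.card_eq.1 (by simp [hm])
  refine ⟨Prod.fst ∘ e, fun b => ?_⟩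
  have hfiber : (Prod.fst ∘ e) ⁻¹' {b} = e ⁻¹' ({b} ×ˢ Set.univ) := by ext; simp
  rw [hfiber, Set.ncard_preimage_of_injective_subset_range e.injective (by simp), Set.ncard_prod]
  simp

theorem ncard_setOf_fst_eq {A B : Type*} (φ : B → A) :
    {p : A × B | p.1 = φ p.2}.ncard = Nat.card B := by
  have hrange : {p : A × B | p.1 = φ p.2} = Set.range fun y => (φ y, y) := by
    ext ⟨a, b⟩; simp [eq_comm]
  rw [hrange, Set.ncard_range_of_injective fun y z h => congrArg Prod.snd h]

namespace AddSubgroup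

variable {A B : Type*} [AddGroup A] [AddGroup B]

def topProdBotEquiv : A ≃ (⊤ : AddSubgroup A).prod (⊥ : AddSubgroup B) where
  toFun a := ⟨(a, 0), by simp [mem_prod]⟩
  invFun g := g.1.1
  left_inv _ := rfl
  right_inv g := Subtype.ext (Prod.ext rfl (by simpa [mem_prod] using g.2.2.symm))

def botProdTopEquiv : B ≃ (⊥ : AddSubgroup A).prod (⊤ : AddSubgroup B) where
  toFun b := ⟨(0, b), by simp [mem_prod]⟩
  invFun g := g.1.2
  left_inv _ := rfl
  right_inv g := Subtype.ext (Prod.ext (by simpa [mem_prod] using g.2.1.symm) rfl)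

theorem index_le_ncard_support {G M : Type*} [AddGroup G] [Finite G] [AddCommMonoid M]
    (H : AddSubgroup G) {f : G → M} (hf : ∀ x, ∑ᶠ g : H, f (x - g) ≠ 0) :
    H.index ≤ (support f).ncard := by
  have hsurj : Surjective fun y : support f => (y : G ⧸ H) := by
    rintro ⟨x⟩
    obtain ⟨g, hg⟩ : ∃ g : H, f (x - g) ≠ 0 := by
      by_contra! h
      exact hf x (finsum_eq_zero_of_forall_eq_zero h)
    exact ⟨⟨x - g, hg⟩, QuotientAddGroup.eq.2 (by simp)⟩
  rw [← Nat.card_coe_set_eq]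
  exact Nat.card_le_card_of_surjective _ hsurj

end AddSubgroup

section GraphTiling

variable {A B R : Type*} [AddGroup A] [AddGroup B] [NonAssocSemiring R]

theorem finsum_topProdBot_indicator_graph (φ : B → A) (c : R) (x : A × B) :
    ∑ᶠ g : (⊤ : AddSubgroup A).prod (⊥ : AddSubgroup B),
      c * {p : A × B | p.1 = φ p.2}.indicator 1 (x - g) = c := by
  obtain ⟨x₁, x₂⟩ := x
  have hmem (a : A) : x₁ - a = φ x₂ ↔ a = -φ x₂ + x₁ := by
    rw [sub_eq_iff_eq_add, eq_neg_add_iff_add_eq, eq_comm]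
  rw [← finsum_comp_equiv AddSubgroup.topProdBotEquiv,
    finsum_eq_single _ (-φ x₂ + x₁) fun a ha => ?_]
  · simp [AddSubgroup.topProdBotEquiv]
  · simp [AddSubgroup.topProdBotEquiv, hmem, ha]

theorem finsum_botProdTop_indicator_graph [Finite B] (φ : B → A) (c : R) (x : A × B) :
    ∑ᶠ g : (⊥ : AddSubgroup A).prod (⊤ : AddSubgroup B),
      c * {p : A × B | p.1 = φ p.2}.indicator 1 (x - g) = c * (φ ⁻¹' {x.1}).ncard := by
  obtain ⟨x₁, x₂⟩ := x
  rw [← finsum_comp_equiv AddSubgroup.botProdTopEquiv]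
  have hfiber (y : B) : {p : A × B | p.1 = φ p.2}.indicator (1 : A × B → R) (x₁, y) =
      (φ ⁻¹' {x₁}).indicator 1 y := by
    by_cases h : φ y = x₁ <;> simp [h, Ne.symm]
  set s := φ ⁻¹' {x₁}
  simp only [AddSubgroup.botProdTopEquiv, Equiv.coe_fn_mk, Prod.mk_sub_mk, sub_zero, hfiber]
  calc ∑ᶠ b, c * s.indicator 1 (x₂ - b) = ∑ᶠ y, c * s.indicator 1 y :=
        finsum_comp_equiv (Equiv.subLeft x₂) (f := fun y => c * s.indicator 1 y)
    _ = c * ∑ᶠ y ∈ s, 1 := by rw [finsum_mem_def, mul_finsum' _ _ (Set.toFinite _)]; rfl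
    _ = c * s.ncard := by rw [← finsum_one, Nat.cast_finsum_mem (Set.toFinite _), Nat.cast_one]

end GraphTiling

theorem minSupp_eq_index {G : Type*} [AddCommGroup G] [Finite G] (H K : AddSubgroup G)
    (f : G → ℝ) (hf : ∀ x, 0 ≤ f x) (hH : ∀ x, ∑ᶠ g : H, f (x - g) = Nat.card H)
    (hK : ∀ x, ∑ᶠ g : K, f (x - g) = Nat.card K) (hsupp : (support f).ncard = H.index) :
    minSupp H K = H.index := by
  refine le_antisymm (Nat.sInf_le ⟨f, hf, hH, hK, hsupp.symm⟩)
    (le_csInf ⟨_, f, hf, hH, hK, hsupp.symm⟩ ?_)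
  rintro n ⟨f', -, hH', -, rfl⟩
  exact H.index_le_ncard_support fun x => by simp [hH' x, Nat.card_pos.ne']

/-- If `|G₁|` divides `|G₂|` then there is a set `F` with `|F| = |G₂|` such that
`|G₁|·𝟙_F` tiles with `G₁×{0}` at level `|G₁|` and with `{0}×G₂` at level
`|G₂|`; consequently `S^{G₁×G₂}_{G₁,G₂} = |G₂| = [G : G₁]`. -/
theorem minSupp_of_dvd {G₁ G₂ : Type*} [AddCommGroup G₁] [AddCommGroup G₂]
    [Finite G₁] [Finite G₂] (hdvd : Nat.card G₁ ∣ Nat.card G₂) :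
    (∃ F : Set (G₁ × G₂), F.ncard = Nat.card G₂ ∧
      (∀ x : G₁ × G₂,
        ∑ᶠ g : ((⊤ : AddSubgroup G₁).prod (⊥ : AddSubgroup G₂)),
          (Nat.card G₁ : ℝ) * F.indicator 1 (x - g) = Nat.card G₁) ∧
      (∀ x : G₁ × G₂,
        ∑ᶠ g : ((⊥ : AddSubgroup G₁).prod (⊤ : AddSubgroup G₂)),
          (Nat.card G₁ : ℝ) * F.indicator 1 (x - g) = Nat.card G₂)) ∧
    minSupp ((⊤ : AddSubgroup G₁).prod (⊥ : AddSubgroup G₂))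
            ((⊥ : AddSubgroup G₁).prod (⊤ : AddSubgroup G₂)) = Nat.card G₂ ∧
    Nat.card G₂ = ((⊤ : AddSubgroup G₁).prod (⊥ : AddSubgroup G₂)).index := by
  obtain ⟨m, hm⟩ := hdvd
  obtain ⟨φ, hφ⟩ := exists_ncard_preimage_singleton_eq hm
  set F : Set (G₁ × G₂) := {p | p.1 = φ p.2}
  have hindex : ((⊤ : AddSubgroup G₁).prod (⊥ : AddSubgroup G₂)).index = Nat.card G₂ := by
    simp
  have htop (x : G₁ × G₂) : ∑ᶠ g : (⊤ : AddSubgroup G₁).prod (⊥ : AddSubgroup G₂),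
      (Nat.card G₁ : ℝ) * F.indicator 1 (x - g) = Nat.card G₁ :=
    finsum_topProdBot_indicator_graph φ _ x
  have hbot (x : G₁ × G₂) : ∑ᶠ g : (⊥ : AddSubgroup G₁).prod (⊤ : AddSubgroup G₂),
      (Nat.card G₁ : ℝ) * F.indicator 1 (x - g) = Nat.card G₂ := by
    rw [finsum_botProdTop_indicator_graph, hφ, hm, Nat.cast_mul]
  have hsupp : support (fun x => (Nat.card G₁ : ℝ) * F.indicator 1 x) = F := by
    simp [support_const (Nat.cast_ne_zero.2 Nat.card_pos.ne')]
  refine ⟨⟨F, ncard_setOf_fst_eq φ, htop, hbot⟩, ?_, hindex.symm⟩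
  rw [← hindex]
  refine minSupp_eq_index _ _ (fun x => (Nat.card G₁ : ℝ) * F.indicator 1 x)
    (fun x => mul_nonneg (Nat.cast_nonneg _) (Set.indicator_nonneg (fun _ _ => zero_le_one) x))
    ?_ ?_ ?_
  · rw [← Nat.card_congr AddSubgroup.topProdBotEquiv]
    exact htop
  · rw [← Nat.card_congr AddSubgroup.botProdTopEquiv]
    exact hbot
  · rw [hsupp, ncard_setOf_fst_eq, hindex]
end

section
/- Let A be an m × n matrix with nonnegative real entries, all row sums equal to n and all column sums equal to m, where n = km + r with k ≥ 1 and 1 ≤ r < m. Then A has at least (k+1)m nonzero entries. -/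
/-!
Every entry is at most its column sum `m`, so a row with at most `k` nonzero entries would sum to at
most `k * m < n`. Hence every row has at least `k + 1` nonzero entries, and there are `m` rows.
-/

open Finset

section Support

variable {ι : Type*} [Fintype ι]

theorem sum_le_card_support_nsmul {M : Type*} [AddCommMonoid M] [PartialOrder M] [AddLeftMono M]
    [DecidableEq M] {f : ι → M} {c : M} (hf : ∀ j, f j ≤ c) :
    ∑ j, f j ≤ #{j | f j ≠ 0} • c := by
  rw [← sum_filter_ne_zero]
  exact sum_le_card_nsmul _ _ _ fun j _ => hf j

theorem lt_card_support_of_mul_lt_sum {f : ι → ℝ} {c : ℝ} {k : ℕ} (hc : 0 ≤ c)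
    (hf : ∀ j, f j ≤ c) (hk : k * c < ∑ j, f j) :
    k < #{j | f j ≠ 0} := by
  have hsum := sum_le_card_support_nsmul hf
  rw [nsmul_eq_mul] at hsum
  exact_mod_cast lt_of_mul_lt_mul_right (hk.trans_le hsum) hc

theorem ncard_support_eq_sum_card_row_support {α β R : Type*} [Fintype α] [Fintype β] [Zero R]
    [DecidableEq R] (A : α → β → R) :
    {p : α × β | A p.1 p.2 ≠ 0}.ncard = ∑ i, #{j | A i j ≠ 0} := by
  rw [Set.ncard_eq_toFinset_card', Set.toFinset_ofPred, card_filter, Fintype.sum_prod_type]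
  simp only [card_filter]

end Support

theorem Matrix.entry_le_col_sum {m n : Type*} [Fintype m] {A : Matrix m n ℝ}
    (hA : ∀ i j, 0 ≤ A i j) (i : m) (j : n) : A i j ≤ ∑ i', A i' j :=
  single_le_sum (fun i' _ => hA i' j) (mem_univ i)

theorem support_lower_bound_matrix_general (m n k r : ℕ)
    (hr : 1 ≤ r) (hn : n = k * m + r)
    (A : Matrix (Fin m) (Fin n) ℝ)
    (hA : ∀ i j, 0 ≤ A i j)
    (hrow : ∀ i, ∑ j, A i j = (n : ℝ))
    (hcol : ∀ j, ∑ i, A i j = (m : ℝ)) :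
    (k + 1) * m ≤ {p : Fin m × Fin n | A p.1 p.2 ≠ 0}.ncard := by
  classical
  have hkm : (k : ℝ) * m < n := by
    rw [hn]
    push_cast
    linarith [(Nat.one_le_cast (α := ℝ)).2 hr]
  have hrow_support (i : Fin m) : k < #{j | A i j ≠ 0} :=
    lt_card_support_of_mul_lt_sum (Nat.cast_nonneg m)
      (fun j => (Matrix.entry_le_col_sum hA i j).trans_eq (hcol j)) (hkm.trans_eq (hrow i).symm)
  calc (k + 1) * m = ∑ _i : Fin m, (k + 1) := by simp [mul_comm]
    _ ≤ ∑ i, #{j | A i j ≠ 0} := sum_le_sum fun i _ => hrow_support i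
    _ = _ := (ncard_support_eq_sum_card_row_support A).symm

/-- An `m × n` nonnegative matrix with row sums `n` and column sums `m`, where
`n = km + r`, `k ≥ 1`, `1 ≤ r < m`, has at least `(k+1)m` nonzero entries. -/
theorem support_lower_bound_matrix (m n k r : ℕ)
    (hk : 1 ≤ k) (hr : 1 ≤ r) (hrm : r < m) (hn : n = k * m + r)
    (A : Matrix (Fin m) (Fin n) ℝ)
    (hA : ∀ i j, 0 ≤ A i j)
    (hrow : ∀ i, ∑ j, A i j = (n : ℝ))
    (hcol : ∀ j, ∑ i, A i j = (m : ℝ)) :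
    (k + 1) * m ≤ {p : Fin m × Fin n | A p.1 p.2 ≠ 0}.ncard :=
  support_lower_bound_matrix_general m n k r hr hn A hA hrow hcol
end

section
/- For every m ≥ 2 and k ≥ 1 there exists an m × (km+1) matrix with nonnegative real entries, all row sums equal to km+1, all column sums equal to m, and exactly (k+1)m nonzero entries. Hence S(m, km+1) = (k+1)m. -/
/-!
Cut `[0, m n]` into the `m` intervals `[i n, (i + 1) n]` and, independently, into the `n`
intervals `[j m, (j + 1) m]`, and let entry `(i, j)` be the length of the intersection of the
`i`-th interval of the first partition with the `j`-th of the second. The row and column sums are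
then the interval lengths `n` and `m`. A pair `(i, j)` whose intervals overlap is determined by the
left end `max (i n) (j m)` of the overlap, a cut point of one of the partitions, and every cut point
below `m n` arises this way. For coprime `m` and `n` the partitions share only the cut point `0`,
so there are `m + n - 1` nonzero entries, that is `(k + 1) m` for `n = k m + 1`.

Conversely, every entry is at most its column sum `m`, so a row summing to `k m + 1` has at least
`k + 1` nonzero entries.
-/

/-- `S m n`: the minimal number of nonzero entries of a nonnegative `m × n`
matrix with all row sums `n` and all column sums `m`. -/
noncomputable def S (m n : ℕ) : ℕ :=
  sInf {s : ℕ | ∃ A : Matrix (Fin m) (Fin n) ℝ,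
    (∀ i j, 0 ≤ A i j) ∧
    (∀ i, ∑ j, A i j = (n : ℝ)) ∧
    (∀ j, ∑ i, A i j = (m : ℝ)) ∧
    s = {p : Fin m × Fin n | A p.1 p.2 ≠ 0}.ncard}

open Finset

noncomputable def overlap (a b c d : ℝ) : ℝ := max 0 (min b d - max a c)

lemma overlap_comm (a b c d : ℝ) : overlap a b c d = overlap c d a b := by
  simp only [overlap, min_comm, max_comm]

lemma overlap_nonneg (a b c d : ℝ) : 0 ≤ overlap a b c d := le_max_left _ _

lemma overlap_pos_iff {a b c d : ℝ} (hab : a < b) (hcd : c < d) :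
    0 < overlap a b c d ↔ a < d ∧ c < b := by
  simp only [overlap, lt_max_iff, lt_irrefl, false_or, sub_pos, max_lt_iff, lt_min_iff]
  tauto

/-- Clamping the endpoints to `[a, b]` makes sums of overlaps with consecutive intervals
telescope. -/
lemma overlap_eq_sub {a b c d : ℝ} (hab : a ≤ b) (hcd : c ≤ d) :
    overlap a b c d = min b (max a d) - min b (max a c) := by
  unfold overlap
  rcases le_total b d with h1 | h1 <;> rcases le_total a c with h2 | h2 <;>
    simp only [min_def, max_def] <;> split_ifs <;> linarith

lemma sum_overlap_of_monotone {a b : ℝ} {g : ℕ → ℝ} {N : ℕ} (hg : Monotone g) (hab : a ≤ b)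
    (h0 : g 0 ≤ a) (hN : b ≤ g N) :
    ∑ j ∈ range N, overlap a b (g j) (g (j + 1)) = b - a := by
  rw [sum_congr rfl fun j _ => overlap_eq_sub hab (hg j.le_succ),
    sum_range_sub (fun j => min b (max a (g j))), max_eq_right (hab.trans hN), min_eq_left hN,
    max_eq_left h0, min_eq_right hab]

noncomputable def overlapMatrix (m n : ℕ) : Matrix (Fin m) (Fin n) ℝ :=
  fun i j => overlap ((i : ℕ) * n) (((i : ℕ) + 1) * n) ((j : ℕ) * m) (((j : ℕ) + 1) * m)

variable {m n : ℕ}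

lemma overlapMatrix_transpose : (overlapMatrix m n).transpose = overlapMatrix n m := by
  ext j i
  exact overlap_comm ..

lemma overlapMatrix_nonneg (i : Fin m) (j : Fin n) : 0 ≤ overlapMatrix m n i j :=
  overlap_nonneg ..

lemma sum_overlapMatrix_row (i : Fin m) : ∑ j, overlapMatrix m n i j = n := by
  have hmono : Monotone fun t : ℕ => (t : ℝ) * m := Nat.mono_cast.mul_const m.cast_nonneg
  have hi : ((i : ℕ) + 1 : ℝ) ≤ m := by exact_mod_cast i.isLt
  have := sum_overlap_of_monotone (a := (i : ℕ) * n) (b := ((i : ℕ) + 1) * n) (N := n) hmono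
    (by gcongr; linarith) (by simp only [Nat.cast_zero, zero_mul]; positivity)
    (by rw [mul_comm]; gcongr)
  rw [← Fin.sum_univ_eq_sum_range] at this
  simpa [overlapMatrix, Nat.cast_succ, add_mul] using this

lemma sum_overlapMatrix_col (j : Fin n) : ∑ i, overlapMatrix m n i j = m := by
  rw [← sum_overlapMatrix_row (m := n) (n := m) j, ← overlapMatrix_transpose]
  rfl

lemma overlapMatrix_ne_zero_iff (i : Fin m) (j : Fin n) :
    overlapMatrix m n i j ≠ 0 ↔ (i : ℕ) * n < (j + 1) * m ∧ (j : ℕ) * m < (i + 1) * n := by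
  have hm : (0 : ℝ) < m := by exact_mod_cast i.pos
  have hn : (0 : ℝ) < n := by exact_mod_cast j.pos
  rw [ne_comm, ← (overlapMatrix_nonneg i j).lt_iff_ne, overlapMatrix,
    overlap_pos_iff (by gcongr; linarith) (by gcongr; linarith)]
  norm_cast

lemma div_eq_of_overlap {i j : ℕ} (hi : i * n < (j + 1) * m) (hj : j * m < (i + 1) * n) :
    max (i * n) (j * m) / n = i := by
  have hn : 0 < n := Nat.pos_of_ne_zero (by rintro rfl; simp at hj)
  refine Nat.div_eq_of_lt_le (le_max_left _ _) (max_lt ?_ hj)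
  rw [Nat.succ_mul]
  omega

lemma card_breakpoints (hm : 0 < m) (hn : 0 < n) (hmn : m.Coprime n) :
    #((range m).image (· * n) ∪ (range n).image (· * m)) = m + n - 1 := by
  have hinter : (range m).image (· * n) ∩ (range n).image (· * m) = {0} := by
    ext x
    simp only [mem_inter, mem_image, mem_range, mem_singleton]
    constructor
    · rintro ⟨⟨i, hi, rfl⟩, j, -, hji⟩
      have : m ∣ i := hmn.dvd_of_dvd_mul_right ⟨j, by rw [← hji, mul_comm]⟩
      rw [Nat.eq_zero_of_dvd_of_lt this hi, zero_mul]
    · rintro rfl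
      exact ⟨⟨0, hm, zero_mul _⟩, 0, hn, zero_mul _⟩
  have := card_union_add_card_inter ((range m).image (· * n)) ((range n).image (· * m))
  rw [hinter, card_image_of_injective _ (mul_left_injective₀ hn.ne'),
    card_image_of_injective _ (mul_left_injective₀ hm.ne'), card_range, card_range,
    card_singleton] at this
  omega

lemma card_overlapping_pairs (hm : 0 < m) (hn : 0 < n) (hmn : m.Coprime n) :
    #{p : Fin m × Fin n | (p.1 : ℕ) * n < (p.2 + 1) * m ∧ (p.2 : ℕ) * m < (p.1 + 1) * n} =
      m + n - 1 := by
  rw [← card_breakpoints hm hn hmn]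
  refine card_bij (fun p _ => max (p.1 * n) (p.2 * m)) ?_ ?_ ?_
  · rintro ⟨i, j⟩ -
    simp only [mem_union, mem_image, mem_range]
    rcases max_choice ((i : ℕ) * n) (j * m) with h | h <;> rw [h]
    · exact Or.inl ⟨i, i.isLt, rfl⟩
    · exact Or.inr ⟨j, j.isLt, rfl⟩
  · rintro ⟨i, j⟩ hij ⟨i', j'⟩ hij' h
    simp only [mem_filter, mem_univ, true_and] at hij hij' h
    have hi := div_eq_of_overlap hij.1 hij.2
    have hi' := div_eq_of_overlap hij'.1 hij'.2
    have hj := div_eq_of_overlap hij.2 hij.1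
    have hj' := div_eq_of_overlap hij'.2 hij'.1
    rw [max_comm] at hj hj'
    refine Prod.ext (Fin.ext ?_) (Fin.ext ?_)
    · rw [← hi, ← hi', h]
    · rw [← hj, ← hj', h]
  · intro x hx
    simp only [mem_union, mem_image, mem_range] at hx
    rcases hx with ⟨i, hi, rfl⟩ | ⟨j, hj, rfl⟩
    · have h1 : i * n < (i * n / m + 1) * m := by
        rw [mul_comm _ m]; exact Nat.lt_mul_div_succ _ hm
      have h2 := Nat.div_mul_le_self (i * n) m
      have hlt : i * n / m < n := Nat.div_lt_of_lt_mul (by gcongr)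
      refine ⟨(⟨i, hi⟩, ⟨i * n / m, hlt⟩), ?_, max_eq_left h2⟩
      simp only [mem_filter, mem_univ, true_and]
      exact ⟨h1, by rw [Nat.succ_mul]; omega⟩
    · have h1 : j * m < (j * m / n + 1) * n := by
        rw [mul_comm _ n]; exact Nat.lt_mul_div_succ _ hn
      have h2 := Nat.div_mul_le_self (j * m) n
      have hlt : j * m / n < m := Nat.div_lt_of_lt_mul (by gcongr)
      refine ⟨(⟨j * m / n, hlt⟩, ⟨j, hj⟩), ?_, max_eq_right h2⟩
      simp only [mem_filter, mem_univ, true_and]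
      exact ⟨by rw [Nat.succ_mul]; omega, h1⟩

lemma ncard_support_overlapMatrix (hm : 0 < m) (hn : 0 < n) (hmn : m.Coprime n) :
    {p : Fin m × Fin n | overlapMatrix m n p.1 p.2 ≠ 0}.ncard = m + n - 1 := by
  simp_rw [overlapMatrix_ne_zero_iff]
  rw [Set.ncard_eq_toFinset_card', Set.toFinset_ofPred]
  exact card_overlapping_pairs hm hn hmn

lemma ncard_support_eq_sum {ι κ : Type*} [Fintype ι] [Fintype κ] (A : Matrix ι κ ℝ) :
    {p : ι × κ | A p.1 p.2 ≠ 0}.ncard = ∑ i, #{j | A i j ≠ 0} := by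
  classical
  rw [Set.ncard_eq_toFinset_card', Set.toFinset_ofPred, card_filter, Fintype.sum_prod_type]
  simp only [card_filter]

lemma sum_le_card_support_mul {ι : Type*} [Fintype ι] (f : ι → ℝ) {c : ℝ} (hf : ∀ i, f i ≤ c) :
    ∑ i, f i ≤ #{i | f i ≠ 0} * c := by
  classical
  rw [← sum_filter_ne_zero, ← nsmul_eq_mul]
  exact sum_le_card_nsmul _ f c fun i _ => hf i

lemma lt_card_support_row {ι κ : Type*} [Fintype ι] [Fintype κ] {A : Matrix ι κ ℝ} {k c : ℕ}
    (hA : ∀ i j, 0 ≤ A i j) (hcol : ∀ j, ∑ i, A i j = c) (i : ι) (hrow : k * c < ∑ j, A i j) :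
    k < #{j | A i j ≠ 0} := by
  have hle : ∀ j, A i j ≤ c := fun j =>
    hcol j ▸ single_le_sum (fun i' _ => hA i' j) (mem_univ i)
  have : (k * c : ℝ) < #{j | A i j ≠ 0} * c := hrow.trans_le (sum_le_card_support_mul _ hle)
  exact Nat.lt_of_mul_lt_mul_right (a := c) (by exact_mod_cast this)

lemma mul_card_le_ncard_support {ι κ : Type*} [Fintype ι] [Fintype κ] {A : Matrix ι κ ℝ}
    {k c : ℕ} (hA : ∀ i j, 0 ≤ A i j) (hcol : ∀ j, ∑ i, A i j = c)
    (hrow : ∀ i, k * c < ∑ j, A i j) :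
    (k + 1) * Fintype.card ι ≤ {p : ι × κ | A p.1 p.2 ≠ 0}.ncard := by
  rw [ncard_support_eq_sum, mul_comm, ← smul_eq_mul, ← card_univ, ← sum_const]
  exact sum_le_sum fun i _ => lt_card_support_row hA hcol i (hrow i)

theorem S_m_km_add_one_general (m k : ℕ) (hm : 2 ≤ m) :
    (∃ A : Matrix (Fin m) (Fin (k * m + 1)) ℝ,
      (∀ i j, 0 ≤ A i j) ∧
      (∀ i, ∑ j, A i j = ((k * m + 1 : ℕ) : ℝ)) ∧
      (∀ j, ∑ i, A i j = (m : ℝ)) ∧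
      {p : Fin m × Fin (k * m + 1) | A p.1 p.2 ≠ 0}.ncard = (k + 1) * m) ∧
    S m (k * m + 1) = (k + 1) * m := by
  have hmn : m.Coprime (k * m + 1) := by
    rw [mul_comm, Nat.coprime_mul_left_add_right]
    exact Nat.coprime_one_right m
  have hcard : {p : Fin m × Fin (k * m + 1) | overlapMatrix m (k * m + 1) p.1 p.2 ≠ 0}.ncard =
      (k + 1) * m := by
    rw [ncard_support_overlapMatrix (by omega) (Nat.succ_pos _) hmn, add_mul, one_mul]
    omega
  refine ⟨⟨overlapMatrix m (k * m + 1), overlapMatrix_nonneg, sum_overlapMatrix_row,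
      sum_overlapMatrix_col, hcard⟩,
    IsLeast.csInf_eq ⟨⟨_, overlapMatrix_nonneg, sum_overlapMatrix_row, sum_overlapMatrix_col,
      hcard.symm⟩, ?_⟩⟩
  rintro s ⟨B, hB, hrow, hcol, rfl⟩
  have hrow' : ∀ i, (k * m : ℝ) < ∑ j, B i j := fun i => by
    rw [hrow i]; push_cast; linarith
  simpa only [Fintype.card_fin] using mul_card_le_ncard_support hB hcol hrow'

/-- For `m ≥ 2`, `k ≥ 1` there is an `m × (km+1)` nonnegative matrix with row
sums `km+1`, column sums `m` and exactly `(k+1)m` nonzero entries; hence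
`S(m, km+1) = (k+1)m`. -/
theorem S_m_km_add_one (m k : ℕ) (hm : 2 ≤ m) (hk : 1 ≤ k) :
    (∃ A : Matrix (Fin m) (Fin (k * m + 1)) ℝ,
      (∀ i j, 0 ≤ A i j) ∧
      (∀ i, ∑ j, A i j = ((k * m + 1 : ℕ) : ℝ)) ∧
      (∀ j, ∑ i, A i j = (m : ℝ)) ∧
      {p : Fin m × Fin (k * m + 1) | A p.1 p.2 ≠ 0}.ncard = (k + 1) * m) ∧
    S m (k * m + 1) = (k + 1) * m :=
  S_m_km_add_one_general m k hm
end

section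
/- For every m ≥ 2, k ≥ 1, there exists a measurable function F: ℝ → ℝ≥0 with ∑_{g∈mℤ} F(x−g) = km+1 and ∑_{g∈(km+1)ℤ} F(x−g) = m for every x ∈ ℝ, such that the Lebesgue measure of supp F equals (k+1)m, which is strictly less than m + (km+1) = (k+1)m + 1 (the support length of the convolution tile 𝟙_{[0,m]}*𝟙_{[0,km+1]}). -/
/-!
With `N = k * m + 1`, take `F x = f ⌊x⌋`, where `f : ℤ → ℝ` equals `m` on the block
`{1, …, N - 1}` and `1` on the `m` spikes `0, N, …, (m - 1) N`. A periodization of `F` at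
`x` is the sum of `f` over one residue class of `⌊x⌋`. Modulo `m`, the block meets every class
in `k` points and, as `N ≡ 1 [MOD m]`, the spikes meet every class once: `k m + 1`. Modulo `N`,
the block meets every nonzero class once and the spikes all lie in the class of `0`: `m` in
both cases. The support consists of `k m + m` unit cells.
-/
open MeasureTheory Finset

namespace Int

theorem Ico_add_mul_filter_modEq_card (a v : ℤ) (q : ℕ) {r : ℤ} (hr : 0 < r) :
    #{x ∈ Ico a (a + q * r) | x ≡ v [ZMOD r]} = q := by
  have hq : ((a + q * r - v : ℤ) : ℚ) / r = ((a - v : ℤ) : ℚ) / r + q := by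
    push_cast; field_simp; ring
  zify
  rw [Ico_filter_modEq_card _ _ hr, ← Int.cast_sub, hq, ceil_add_natCast, ← Int.cast_sub]
  simp

theorem Ioo_add_filter_modEq_card (a v : ℤ) {r : ℤ} (hr : 0 < r) :
    #{x ∈ Ioo a (a + r) | x ≡ v [ZMOD r]} = if a ≡ v [ZMOD r] then 0 else 1 := by
  have h := Ico_add_mul_filter_modEq_card a v 1 hr
  rw [Nat.cast_one, one_mul, ← insert_Ico_add_one_left_eq_Ico (by omega), filter_insert] at h
  rw [← Ico_add_one_left_eq_Ioo]
  split_ifs at h ⊢ with hav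
  · rw [card_insert_of_notMem (by simp)] at h
    omega
  · exact h

theorem floor_sub_natCast_mul {R : Type*} [Ring R] [LinearOrder R] [IsStrictOrderedRing R]
    [FloorRing R] (x : R) (d : ℕ) (g : ℤ) : ⌊x - d * g⌋ = ⌊x⌋ - d * g := by
  rw [← cast_natCast, ← cast_mul, floor_sub_intCast]

end Int

theorem hasSum_indicator_sub_mul {M : Type*} [AddCommMonoid M] [TopologicalSpace M]
    (S : Finset ℤ) (c : M) {d : ℤ} (hd : d ≠ 0) (n : ℤ) :
    HasSum (fun g : ℤ => (S : Set ℤ).indicator (fun _ => c) (n - d * g))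
      (#{p ∈ S | p ≡ n [ZMOD d]} • c) := by
  have hinj : Function.Injective fun g : ℤ => n - d * g := fun g h hgh => by
    simpa [hd] using hgh
  set T := S.preimage (fun g => n - d * g) hinj.injOn
  have hT : #T = #{p ∈ S | p ≡ n [ZMOD d]} := by
    classical
    rw [card_preimage]
    congr 1
    refine filter_congr fun p _ => ?_
    simp only [Set.mem_range, Int.modEq_iff_dvd, dvd_iff_exists_eq_mul_right, sub_eq_iff_eq_add]
    constructor
    · rintro ⟨g, rfl⟩; exact ⟨g, by ring⟩
    · rintro ⟨g, hg⟩; exact ⟨g, by linarith⟩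
  have hf : (fun g : ℤ => (S : Set ℤ).indicator (fun _ => c) (n - d * g))
      = (T : Set ℤ).indicator fun _ => c := by
    ext g
    simp only [T, coe_preimage]
    rfl
  rw [hf, ← hT, ← sum_const,
    ← sum_congr rfl fun g hg => Set.indicator_of_mem (mem_coe.2 hg) (fun _ => c)]
  exact hasSum_sum_of_ne_finset_zero fun g hg => Set.indicator_of_notMem (mt mem_coe.1 hg) _

theorem volume_preimage_floor_finset (s : Finset ℤ) :
    volume (Int.floor ⁻¹' (s : Set ℤ) : Set ℝ) = #s := by
  rw [← sum_measure_preimage_singleton s fun p _ =>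
    Int.measurable_floor (measurableSet_singleton p)]
  simp [Int.preimage_floor_singleton]

namespace EfficientTile

variable (m k : ℕ)

noncomputable def block : Finset ℤ := Ioo 0 (k * m + 1)

noncomputable def spikes : Finset ℤ := (Ico 0 (m : ℤ)).image (· * (k * m + 1))

noncomputable def tile : ℤ → ℝ :=
  (block m k : Set ℤ).indicator (fun _ => (m : ℝ)) +
    (spikes m k : Set ℤ).indicator (fun _ => 1)

variable {m k}

theorem card_block : #(block m k) = k * m := by
  rw [block, Int.card_Ioo, sub_zero, add_sub_cancel_right, ← Nat.cast_mul, Int.toNat_natCast]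

theorem card_spikes : #(spikes m k) = m := by
  rw [spikes, card_image_of_injective _ (mul_left_injective₀ (by positivity)), Int.card_Ico]
  simp

theorem disjoint_block_spikes : Disjoint (block m k) (spikes m k) := by
  simp only [block, spikes, disjoint_left, mem_Ioo, mem_Ico, mem_image]
  rintro _ ⟨h1, h2⟩ ⟨i, ⟨hi0, -⟩, rfl⟩
  rcases hi0.eq_or_lt with rfl | hi
  · simp at h1
  · nlinarith

theorem card_filter_block_modEq_left (hm : 0 < m) (n : ℤ) :
    #{p ∈ block m k | p ≡ n [ZMOD m]} = k := by
  rw [block, ← Ico_add_one_left_eq_Ioo, zero_add, add_comm]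
  exact Int.Ico_add_mul_filter_modEq_card 1 n k (by exact_mod_cast hm)

theorem card_filter_spikes_modEq_left (hm : 0 < m) (n : ℤ) :
    #{p ∈ spikes m k | p ≡ n [ZMOD m]} = 1 := by
  have hmul (i : ℤ) : i * (k * m + 1) ≡ i [ZMOD m] :=
    Int.modEq_iff_dvd.2 ⟨-(i * k), by ring⟩
  rw [spikes, filter_image, card_image_of_injective _ (mul_left_injective₀ (by positivity)),
    filter_congr fun i _ => ⟨(hmul i).symm.trans, (hmul i).trans⟩]
  simpa using Int.Ico_add_mul_filter_modEq_card 0 n 1 (by exact_mod_cast hm)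

theorem card_filter_block_modEq_right (n : ℤ) :
    #{p ∈ block m k | p ≡ n [ZMOD k * m + 1]} = if 0 ≡ n [ZMOD k * m + 1] then 0 else 1 := by
  rw [block]
  simpa using Int.Ioo_add_filter_modEq_card 0 n (r := k * m + 1) (by positivity)

theorem card_filter_spikes_modEq_right (n : ℤ) :
    #{p ∈ spikes m k | p ≡ n [ZMOD k * m + 1]} = if 0 ≡ n [ZMOD k * m + 1] then m else 0 := by
  have hmul (i : ℤ) : i * (k * m + 1) ≡ 0 [ZMOD k * m + 1] :=
    Int.modEq_zero_iff_dvd.2 (dvd_mul_left _ _)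
  rw [spikes, filter_image, card_image_of_injective _ (mul_left_injective₀ (by positivity)),
    filter_congr fun i _ => ⟨(hmul i).symm.trans, (hmul i).trans⟩, filter_const]
  split_ifs <;> simp

theorem tile_nonneg (n : ℤ) : 0 ≤ tile m k n :=
  add_nonneg (Set.indicator_nonneg (fun _ _ => by positivity) n)
    (Set.indicator_nonneg (fun _ _ => zero_le_one) n)

theorem support_tile (hm : 0 < m) :
    Function.support (tile m k) = ↑(block m k ∪ spikes m k) := by
  ext p
  have hdisj : p ∈ block m k → p ∉ spikes m k := fun h =>
    disjoint_left.1 disjoint_block_spikes h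
  by_cases hb : p ∈ block m k <;> by_cases hs : p ∈ spikes m k <;>
    simp_all [tile, hm.ne']

theorem hasSum_tile_sub_mul {d : ℤ} (hd : d ≠ 0) (n : ℤ) :
    HasSum (fun g => tile m k (n - d * g))
      (#{p ∈ block m k | p ≡ n [ZMOD d]} * m + #{p ∈ spikes m k | p ≡ n [ZMOD d]}) := by
  have h := (hasSum_indicator_sub_mul (block m k) (m : ℝ) hd n).add
    (hasSum_indicator_sub_mul (spikes m k) (1 : ℝ) hd n)
  rwa [nsmul_eq_mul, nsmul_eq_mul, mul_one] at h

end EfficientTile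

open EfficientTile

theorem efficient_common_tile_on_R_general (m k : ℕ) (hm : 2 ≤ m) :
    (∃ F : ℝ → ℝ, Measurable F ∧ (∀ x, 0 ≤ F x) ∧
      (∀ x : ℝ, ∑' g : ℤ, F (x - (m : ℝ) * g) = (k * m + 1 : ℕ)) ∧
      (∀ x : ℝ, ∑' g : ℤ, F (x - ((k * m + 1 : ℕ) : ℝ) * g) = m) ∧
      volume (Function.support F) = (((k + 1) * m : ℕ) : ENNReal)) ∧
    (k + 1) * m < m + (k * m + 1) := by
  have hm0 : 0 < m := by omega
  refine ⟨⟨fun x => tile m k ⌊x⌋, (measurable_of_countable _).comp Int.measurable_floor,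
    fun x => tile_nonneg _, fun x => ?_, fun x => ?_, ?_⟩, by linarith [add_one_mul k m]⟩
  · simp_rw [Int.floor_sub_natCast_mul]
    rw [(hasSum_tile_sub_mul (by positivity) ⌊x⌋).tsum_eq, card_filter_block_modEq_left hm0,
      card_filter_spikes_modEq_left hm0]
    push_cast; ring
  · simp_rw [Int.floor_sub_natCast_mul]
    rw [(hasSum_tile_sub_mul (by positivity) ⌊x⌋).tsum_eq]
    push_cast
    rw [card_filter_block_modEq_right, card_filter_spikes_modEq_right]
    split_ifs <;> simp
  · change volume (Function.support (tile m k ∘ Int.floor)) = _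
    rw [Function.support_comp_eq_preimage, support_tile hm0, volume_preimage_floor_finset,
      card_union_of_disjoint disjoint_block_spikes, card_block, card_spikes, add_one_mul]

/-- For `m ≥ 2`, `k ≥ 1` there is a nonnegative measurable `F : ℝ → ℝ` tiling
with `mℤ` at level `km+1` and with `(km+1)ℤ` at level `m`, whose support has
Lebesgue measure `(k+1)m < m + (km+1)`, the support length of the convolution
tile. -/
theorem efficient_common_tile_on_R (m k : ℕ) (hm : 2 ≤ m) (hk : 1 ≤ k) :
    (∃ F : ℝ → ℝ, Measurable F ∧ (∀ x, 0 ≤ F x) ∧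
      (∀ x : ℝ, ∑' g : ℤ, F (x - (m : ℝ) * g) = (k * m + 1 : ℕ)) ∧
      (∀ x : ℝ, ∑' g : ℤ, F (x - ((k * m + 1 : ℕ) : ℝ) * g) = m) ∧
      volume (Function.support F) = (((k + 1) * m : ℕ) : ENNReal)) ∧
    (k + 1) * m < m + (k * m + 1) :=
  efficient_common_tile_on_R_general m k hm
end
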